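/- arXiv:2104.06841 — 2 statements merged into one kernel-verified Lean document; each statement's English description precedes it below -/
import Mathlib

section
/- Let X be a real Banach space in which every closed bounded convex subset is the closed convex hull of its extreme points (e.g., X has the Radon–Nikodým property). Then the set A = { x ∈ X : x = Σ_{i=1}^n λ_i x_i with λ_i > 0, x_i extreme points of B_X, and ‖x‖ = Σ_{i=1}^n λ_i } is dense in X. -/
/-!
Every `x ≠ 0` is `‖x‖ • u` with `‖u‖ = 1`. A norming functional `g` of `u` exposes the face
`F = {z ∈ B_X | g z = 1}` of the unit ball, which contains `u`, is closed, bounded and convex, and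
consists of unit vectors. By hypothesis `u` is approximated by convex combinations of extreme points
of `F`; these are extreme points of `B_X`, and each such combination `z` has `‖z‖ = 1 = ∑ λᵢ`.
Since the set `A` is a cone, `‖x‖ • z` lies in `A` and approximates `x`.
-/

section

variable {X : Type*} [NormedAddCommGroup X] [NormedSpace ℝ X]

variable (X) in
/-- By the triangle inequality `∑ λᵢ ≥ ‖x‖` for every such representation; these are the points
where the bound is attained. -/
def optimalExtremeSums : Set X :=
  {x : X | ∃ (n : ℕ) (lam : Fin n → ℝ) (e : Fin n → X),
    (∀ i, 0 < lam i) ∧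
    (∀ i, e i ∈ (Metric.closedBall (0 : X) 1).extremePoints ℝ) ∧
    x = ∑ i, lam i • e i ∧ ‖x‖ = ∑ i, lam i}

theorem zero_mem_optimalExtremeSums : (0 : X) ∈ optimalExtremeSums X :=
  ⟨0, Fin.elim0, Fin.elim0, fun i => i.elim0, fun i => i.elim0, by simp, by simp⟩

theorem mem_optimalExtremeSums_of_fintype {ι : Type*} [Fintype ι] {x : X} (lam : ι → ℝ)
    (e : ι → X) (hlam : ∀ i, 0 < lam i)
    (he : ∀ i, e i ∈ (Metric.closedBall (0 : X) 1).extremePoints ℝ)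
    (hx : x = ∑ i, lam i • e i) (hnorm : ‖x‖ = ∑ i, lam i) :
    x ∈ optimalExtremeSums X := by
  let σ := (Fintype.equivFin ι).symm
  refine ⟨Fintype.card ι, lam ∘ σ, e ∘ σ, fun i => hlam _, fun i => he _, ?_, ?_⟩
  · rw [hx]; exact (σ.sum_comp fun i => lam i • e i).symm
  · rw [hnorm]; exact (σ.sum_comp lam).symm

theorem smul_mem_optimalExtremeSums {r : ℝ} (hr : 0 < r) {x : X}
    (hx : x ∈ optimalExtremeSums X) : r • x ∈ optimalExtremeSums X := by
  obtain ⟨n, lam, e, hlam, he, rfl, hnorm⟩ := hx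
  refine mem_optimalExtremeSums_of_fintype (fun i => r * lam i) e
    (fun i => mul_pos hr (hlam i)) he ?_ ?_
  · simp only [Finset.smul_sum, smul_smul]
  · rw [norm_smul, hnorm, Real.norm_of_nonneg hr.le, Finset.mul_sum]

theorem mem_optimalExtremeSums_of_mem_convexHull {z : X}
    (hz : z ∈ convexHull ℝ ((Metric.closedBall (0 : X) 1).extremePoints ℝ)) (hz1 : ‖z‖ = 1) :
    z ∈ optimalExtremeSums X := by
  obtain ⟨ι, _, e, w, he, -, hw, hw1, rfl⟩ := eq_pos_convex_span_of_mem_convexHull hz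
  exact mem_optimalExtremeSums_of_fintype w e hw (fun i => he ⟨i, rfl⟩) rfl (hz1.trans hw1.symm)

theorem apply_le_norm_of_norm_le_one {g : StrongDual ℝ X} (hg : ‖g‖ ≤ 1) (y : X) :
    g y ≤ ‖y‖ :=
  (le_abs_self _).trans ((g.le_opNorm y).trans (mul_le_of_le_one_left (norm_nonneg _) hg))

theorem mem_toExposed_closedBall_of_apply_eq_one {g : StrongDual ℝ X} (hg : ‖g‖ ≤ 1) {u : X}
    (hu : u ∈ Metric.closedBall 0 1) (hgu : g u = 1) :
    u ∈ g.toExposed (Metric.closedBall 0 1) :=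
  ⟨hu, fun y hy => hgu ▸ (apply_le_norm_of_norm_le_one hg y).trans (mem_closedBall_zero_iff.mp hy)⟩

theorem norm_eq_one_of_mem_toExposed_closedBall {g : StrongDual ℝ X} (hg : ‖g‖ ≤ 1) {u z : X}
    (hu : u ∈ Metric.closedBall 0 1) (hgu : g u = 1)
    (hz : z ∈ g.toExposed (Metric.closedBall 0 1)) : ‖z‖ = 1 :=
  le_antisymm (mem_closedBall_zero_iff.mp hz.1)
    (hgu ▸ (hz.2 u hu).trans (apply_le_norm_of_norm_le_one hg z))

theorem mem_closure_optimalExtremeSums_of_norm_eq_one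
    (hKM : ∀ C : Set X, IsClosed C → Bornology.IsBounded C → Convex ℝ C →
      C = closure (convexHull ℝ (C.extremePoints ℝ)))
    {u : X} (hu : ‖u‖ = 1) : u ∈ closure (optimalExtremeSums X) := by
  obtain ⟨g, hg, hgu⟩ := exists_dual_vector ℝ u (ne_zero_of_norm_ne_zero (by simp [hu]))
  have hgu1 : g u = 1 := by rw [hu] at hgu; exact_mod_cast hgu
  set B := Metric.closedBall (0 : X) 1
  set F := g.toExposed B
  have hFB : F ⊆ B := fun z hz => hz.1
  have hF : IsExposed ℝ B F := ContinuousLinearMap.toExposed.isExposed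
  have hFconvex : Convex ℝ F := hF.convex (convex_closedBall 0 1)
  have huB : u ∈ B := mem_closedBall_zero_iff.mpr hu.le
  have huF : u ∈ F := mem_toExposed_closedBall_of_apply_eq_one hg.le huB hgu1
  have hhull : convexHull ℝ (F.extremePoints ℝ) ⊆ optimalExtremeSums X := fun z hz =>
    mem_optimalExtremeSums_of_mem_convexHull
      (convexHull_mono hF.isExtreme.extremePoints_subset_extremePoints hz)
      (norm_eq_one_of_mem_toExposed_closedBall hg.le huB hgu1
        (convexHull_min extremePoints_subset hFconvex hz))
  rw [hKM F (hF.isClosed Metric.isClosed_closedBall)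
    (Metric.isBounded_closedBall.subset hFB) hFconvex] at huF
  exact closure_mono hhull huF

end

theorem stmt3_general (X : Type*) [NormedAddCommGroup X] [NormedSpace ℝ X]
    (hKM : ∀ C : Set X, IsClosed C → Bornology.IsBounded C → Convex ℝ C →
      C = closure (convexHull ℝ (C.extremePoints ℝ))) :
    Dense {x : X | ∃ (n : ℕ) (lam : Fin n → ℝ) (e : Fin n → X),
      (∀ i, 0 < lam i) ∧
      (∀ i, e i ∈ (Metric.closedBall (0 : X) 1).extremePoints ℝ) ∧
      x = ∑ i, lam i • e i ∧ ‖x‖ = ∑ i, lam i} := by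
  change Dense (optimalExtremeSums X)
  intro x
  rcases eq_or_ne x 0 with rfl | hx
  · exact subset_closure zero_mem_optimalExtremeSums
  have hxpos : 0 < ‖x‖ := norm_pos_iff.mpr hx
  have hu : ‖‖x‖⁻¹ • x‖ = 1 := by rw [norm_smul, norm_inv, norm_norm, inv_mul_cancel₀ hxpos.ne']
  have hscale := map_mem_closure (continuous_const_smul ‖x‖)
    (mem_closure_optimalExtremeSums_of_norm_eq_one hKM hu)
    (fun z hz => smul_mem_optimalExtremeSums hxpos hz)
  rwa [smul_inv_smul₀ hxpos.ne'] at hscale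

/-- In a real Banach space in which every closed bounded convex set is the closed convex
hull of its extreme points, the set of points `x = ∑ λᵢ xᵢ` with `λᵢ > 0`,
`xᵢ` extreme points of the unit ball and `‖x‖ = ∑ λᵢ`, is dense. -/
theorem stmt3 (X : Type*) [NormedAddCommGroup X] [NormedSpace ℝ X] [CompleteSpace X]
    (hKM : ∀ C : Set X, IsClosed C → Bornology.IsBounded C → Convex ℝ C →
      C = closure (convexHull ℝ (C.extremePoints ℝ))) :
    Dense {x : X | ∃ (n : ℕ) (lam : Fin n → ℝ) (e : Fin n → X),
      (∀ i, 0 < lam i) ∧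
      (∀ i, e i ∈ (Metric.closedBall (0 : X) 1).extremePoints ℝ) ∧
      x = ∑ i, lam i • e i ∧ ‖x‖ = ∑ i, lam i} :=
  stmt3_general X hKM
end

section
/- Let X be a finite-dimensional Banach space whose closed unit ball is the convex hull of finitely many points x₁, …, x_n ∈ S_X, and let Y be a dual Banach space, Y = Z*. Then every z in X ⊗π Y with ‖z‖_π = 1 can be written as a finite convex combination z = Σ_{i} μ_i u_i ⊗ v_i with ‖u_i‖ = ‖v_i‖ = 1 and Σ μ_i = 1; in particular ‖z‖_π = Σ μ_i ‖u_i‖‖v_i‖, i.e., z attains its projective norm. -/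
open scoped TensorProduct BigOperators

/-- The projective tensor norm on `E ⊗ F`. -/
noncomputable def projNorm {E F : Type*} [NormedAddCommGroup E] [NormedSpace ℝ E]
    [NormedAddCommGroup F] [NormedSpace ℝ F] (z : E ⊗[ℝ] F) : ℝ :=
  sInf {r : ℝ | ∃ (n : ℕ) (e : Fin n → E) (f : Fin n → F),
    z = ∑ i, e i ⊗ₜ[ℝ] f i ∧ r = ∑ i, ‖e i‖ * ‖f i‖}

namespace Stmt12Aux

open NormedSpace Metric

variable {E F : Type*} [NormedAddCommGroup E] [NormedSpace ℝ E]
  [NormedAddCommGroup F] [NormedSpace ℝ F]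

lemma projNorm_bddBelow (z : E ⊗[ℝ] F) :
    BddBelow {r : ℝ | ∃ (n : ℕ) (e : Fin n → E) (f : Fin n → F),
      z = ∑ i, e i ⊗ₜ[ℝ] f i ∧ r = ∑ i, ‖e i‖ * ‖f i‖} := by
  refine ⟨0, fun r hr => ?_⟩
  obtain ⟨k, e, f, -, rfl⟩ := hr
  exact Finset.sum_nonneg fun i _ => mul_nonneg (norm_nonneg _) (norm_nonneg _)

lemma projNorm_le (z : E ⊗[ℝ] F) {m : ℕ} (e : Fin m → E) (f : Fin m → F)
    (h : z = ∑ i, e i ⊗ₜ[ℝ] f i) : projNorm z ≤ ∑ i, ‖e i‖ * ‖f i‖ :=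
  csInf_le (projNorm_bddBelow z) ⟨m, e, f, h, rfl⟩

/-- membership in the polytope ball gives convex-combination weights -/
lemma convex_rep {X : Type*} [NormedAddCommGroup X] [NormedSpace ℝ X]
    {n : ℕ} {x : Fin n → X}
    (hball : Metric.closedBall (0 : X) 1 = convexHull ℝ (Set.range x))
    {y : X} (hy : ‖y‖ ≤ 1) :
    ∃ t : Fin n → ℝ, (∀ i, 0 ≤ t i) ∧ (∑ i, t i) = 1 ∧ y = ∑ i, t i • x i := by
  have hmem : y ∈ convexHull ℝ (Set.range x) := by
    rw [← hball]; simpa [Metric.mem_closedBall] using hy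
  rw [mem_convexHull_iff_exists_fintype] at hmem
  obtain ⟨ι, _, w, p, hw0, hw1, hp, hsum⟩ := hmem
  choose σ hσ using hp
  classical
  refine ⟨fun j => ∑ i ∈ Finset.univ.filter (fun i => σ i = j), w i,
    fun j => Finset.sum_nonneg fun i _ => hw0 i, ?_, ?_⟩
  · rw [Finset.sum_fiberwise]; exact hw1
  · have : ∀ j, (∑ i ∈ Finset.univ.filter (fun i => σ i = j), w i) • x j
        = ∑ i ∈ Finset.univ.filter (fun i => σ i = j), w i • p i := by
      intro j
      rw [Finset.sum_smul]
      refine Finset.sum_congr rfl fun i hi => ?_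
      rw [Finset.mem_filter] at hi
      rw [← hσ i, hi.2]
    rw [← hsum]
    simp_rw [this]
    rw [Finset.sum_fiberwise]

/-- Step A: approximate representations supported on the vertices. -/
lemma approx_rep {X Z : Type*} [NormedAddCommGroup X] [NormedSpace ℝ X]
    [NormedAddCommGroup Z] [NormedSpace ℝ Z]
    {n : ℕ} {x : Fin n → X}
    (hball : Metric.closedBall (0 : X) 1 = convexHull ℝ (Set.range x))
    {z : X ⊗[ℝ] StrongDual ℝ Z} (hz : projNorm z = 1) {ε : ℝ} (hε : 0 < ε) :
    ∃ w : Fin n → StrongDual ℝ Z, z = ∑ i, x i ⊗ₜ[ℝ] w i ∧ ∑ i, ‖w i‖ < 1 + ε := by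
  classical
  set S := {r : ℝ | ∃ (m : ℕ) (e : Fin m → X) (f : Fin m → StrongDual ℝ Z),
    z = ∑ i, e i ⊗ₜ[ℝ] f i ∧ r = ∑ i, ‖e i‖ * ‖f i‖} with hS
  have hne : S.Nonempty := by
    by_contra h
    rw [Set.not_nonempty_iff_eq_empty] at h
    have : projNorm z = 0 := by rw [projNorm, ← hS, h, Real.sInf_empty]
    rw [hz] at this; norm_num at this
  have hlt : sInf S < 1 + ε := by
    have : projNorm z = sInf S := rfl
    rw [← this, hz]; linarith
  obtain ⟨r, hrS, hr⟩ := exists_lt_of_csInf_lt hne hlt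
  obtain ⟨m, e, f, hrep, rfl⟩ := hrS
  -- for each j, write e j as a nonnegative combination of the x i
  have key : ∀ j : Fin m, ∃ t : Fin n → ℝ, (∀ i, 0 ≤ t i) ∧ (∑ i, t i) ≤ 1 ∧
      e j = ∑ i, (‖e j‖ * t i) • x i := by
    intro j
    by_cases hej : e j = 0
    · exact ⟨0, fun i => le_rfl, by simp, by simp [hej]⟩
    · have hnorm : ‖‖e j‖⁻¹ • e j‖ ≤ 1 := by
        rw [norm_smul, norm_inv, norm_norm]
        rw [inv_mul_cancel₀ (norm_ne_zero_iff.2 hej)]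
      obtain ⟨t, ht0, ht1, hrep'⟩ := convex_rep hball hnorm
      refine ⟨t, ht0, le_of_eq ht1, ?_⟩
      have := congrArg (fun y => ‖e j‖ • y) hrep'
      simp only [Finset.smul_sum, smul_smul] at this
      rw [mul_inv_cancel₀ (norm_ne_zero_iff.2 hej), one_smul] at this
      simpa using this
  choose t ht0 ht1 hte using key
  refine ⟨fun i => ∑ j, (‖e j‖ * t j i) • f j, ?_, ?_⟩
  · rw [hrep]
    have : ∀ j, e j ⊗ₜ[ℝ] f j = ∑ i, x i ⊗ₜ[ℝ] ((‖e j‖ * t j i) • f j) := by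
      intro j
      conv_lhs => rw [hte j]
      rw [TensorProduct.sum_tmul]
      refine Finset.sum_congr rfl fun i _ => ?_
      rw [TensorProduct.smul_tmul, TensorProduct.tmul_smul]
    simp_rw [this]
    rw [Finset.sum_comm]
    simp_rw [← TensorProduct.tmul_sum]
  · calc ∑ i, ‖∑ j, (‖e j‖ * t j i) • f j‖
        ≤ ∑ i, ∑ j, ‖e j‖ * t j i * ‖f j‖ := by
          refine Finset.sum_le_sum fun i _ => ?_
          refine (norm_sum_le _ _).trans (le_of_eq ?_)
          refine Finset.sum_congr rfl fun j _ => ?_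
          rw [norm_smul, Real.norm_eq_abs,
            abs_of_nonneg (mul_nonneg (norm_nonneg _) (ht0 j i))]
      _ = ∑ j, (∑ i, t j i) * (‖e j‖ * ‖f j‖) := by
          rw [Finset.sum_comm]
          refine Finset.sum_congr rfl fun j _ => ?_
          rw [Finset.sum_mul]
          refine Finset.sum_congr rfl fun i _ => ?_; ring
      _ ≤ ∑ j, ‖e j‖ * ‖f j‖ := by
          refine Finset.sum_le_sum fun j _ => ?_
          have h1 : 0 ≤ ‖e j‖ * ‖f j‖ := mul_nonneg (norm_nonneg _) (norm_nonneg _)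
          nlinarith [ht1 j]
      _ < 1 + ε := hr

end Stmt12Aux

open Stmt12Aux NormedSpace in
/-- Step B: an exact representation supported on the vertices, via weak-* compactness. -/
lemma exact_rep {X Z : Type*} [NormedAddCommGroup X] [NormedSpace ℝ X]
    [FiniteDimensional ℝ X] [NormedAddCommGroup Z] [NormedSpace ℝ Z]
    {n : ℕ} {x : Fin n → X}
    (hball : Metric.closedBall (0 : X) 1 = convexHull ℝ (Set.range x))
    {z : X ⊗[ℝ] StrongDual ℝ Z} (hz : projNorm z = 1) :
    ∃ w : Fin n → StrongDual ℝ Z, z = ∑ i, x i ⊗ₜ[ℝ] w i ∧ ∑ i, ‖w i‖ ≤ 1 := by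
  classical
  set d := Module.finrank ℝ X with hd
  set b : Module.Basis (Fin d) ℝ X := Module.finBasis ℝ X with hb
  set φ : Fin d → (X ⊗[ℝ] StrongDual ℝ Z →ₗ[ℝ] StrongDual ℝ Z) := fun k =>
    TensorProduct.lift ((LinearMap.lsmul ℝ (StrongDual ℝ Z)).comp (b.coord k)) with hφ
  have hφ_tmul : ∀ (k) (u : X) (v : StrongDual ℝ Z), φ k (u ⊗ₜ[ℝ] v) = b.repr u k • v := by
    intro k u v
    simp [hφ, TensorProduct.lift.tmul, Module.Basis.coord_apply]
  have hId : ∀ a : X ⊗[ℝ] StrongDual ℝ Z, (∑ k, b k ⊗ₜ[ℝ] (φ k a)) = a := by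
    intro a
    induction a using TensorProduct.induction_on with
    | zero => simp
    | tmul u v =>
        calc ∑ k, b k ⊗ₜ[ℝ] (φ k (u ⊗ₜ[ℝ] v)) = ∑ k, (b.repr u k • b k) ⊗ₜ[ℝ] v := by
              refine Finset.sum_congr rfl fun k _ => ?_
              rw [hφ_tmul, TensorProduct.smul_tmul]
          _ = (∑ k, b.repr u k • b k) ⊗ₜ[ℝ] v := by rw [TensorProduct.sum_tmul]
          _ = u ⊗ₜ[ℝ] v := by rw [b.sum_repr u]
    | add a₁ a₂ h₁ h₂ =>
        simp only [map_add, TensorProduct.tmul_add, Finset.sum_add_distrib, h₁, h₂]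
  have hφL : ∀ (w : Fin n → StrongDual ℝ Z) (k),
      φ k (∑ i, x i ⊗ₜ[ℝ] w i) = ∑ i, b.repr (x i) k • w i := by
    intro w k
    rw [map_sum]
    exact Finset.sum_congr rfl fun i _ => hφ_tmul k _ _
  have hchar : ∀ w : Fin n → StrongDual ℝ Z,
      (z = ∑ i, x i ⊗ₜ[ℝ] w i) ↔ ∀ k, ∑ i, b.repr (x i) k • w i = φ k z := by
    intro w
    constructor
    · rintro rfl k; exact (hφL w k).symm
    · intro h
      rw [← hId z, ← hId (∑ i, x i ⊗ₜ[ℝ] w i)]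
      refine Finset.sum_congr rfl fun k _ => ?_
      rw [hφL w k, h k]
  -- move to the weak-* dual
  set g : WeakDual ℝ Z → StrongDual ℝ Z := fun u => WeakDual.toStrongDual u with hg
  set S : ℕ → Set (Fin n → WeakDual ℝ Z) := fun m =>
    {w | (∀ k, ∑ i, b.repr (x i) k • g (w i) = φ k z) ∧
      ∑ i, ‖g (w i)‖ ≤ 1 + 1 / (m + 1)} with hSdef
  have hgnorm_lsc : LowerSemicontinuous fun u : WeakDual ℝ Z => ‖g u‖ := by
    rw [lowerSemicontinuous_iff_isClosed_preimage]
    intro y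
    have : (fun u : WeakDual ℝ Z => ‖g u‖) ⁻¹' Set.Iic y
        = WeakDual.toStrongDual ⁻¹' Metric.closedBall 0 y := by
      ext u; simp [hg, mem_closedBall_zero_iff]
    rw [this]
    exact WeakDual.isClosed_closedBall 0 y
  have hA_closed : IsClosed {w : Fin n → WeakDual ℝ Z |
      ∀ k, ∑ i, b.repr (x i) k • g (w i) = φ k z} := by
    have : {w : Fin n → WeakDual ℝ Z | ∀ k, ∑ i, b.repr (x i) k • g (w i) = φ k z}
        = ⋂ k, {w : Fin n → WeakDual ℝ Z |
            (∑ i, b.repr (x i) k • w i) = StrongDual.toWeakDual (φ k z)} := by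
      ext w
      simp only [Set.mem_iInter, Set.mem_setOf_eq]
      refine forall_congr' fun k => ?_
      constructor
      · intro h; exact congrArg StrongDual.toWeakDual h
      · intro h; exact congrArg WeakDual.toStrongDual h
    rw [this]
    refine isClosed_iInter fun k => ?_
    have hcont : Continuous fun w : Fin n → WeakDual ℝ Z =>
        ∑ i, b.repr (x i) k • w i := by
      refine continuous_finset_sum _ fun i _ => ?_
      exact (continuous_apply i : Continuous fun w : Fin n → WeakDual ℝ Z => w i).const_smul (b.repr (x i) k)
    exact (isClosed_singleton).preimage hcont
  have hsum_closed : ∀ c : ℝ, IsClosed {w : Fin n → WeakDual ℝ Z | ∑ i, ‖g (w i)‖ ≤ c} := by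
    intro c
    have hlsc : LowerSemicontinuous fun w : Fin n → WeakDual ℝ Z => ∑ i, ‖g (w i)‖ :=
      lowerSemicontinuous_sum (f := fun i (w : Fin n → WeakDual ℝ Z) => ‖g (w i)‖) fun i _ =>
        LowerSemicontinuous.comp (f := fun u : WeakDual ℝ Z => ‖g u‖)
        (g := fun w : Fin n → WeakDual ℝ Z => w i) hgnorm_lsc (continuous_apply i)
    exact hlsc.isClosed_preimage c
  have hS_closed : ∀ m, IsClosed (S m) := fun m =>
    hA_closed.inter (hsum_closed (1 + 1 / (m + 1)))
  have hS_compact : ∀ m, IsCompact (S m) := by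
    intro m
    have hsub : S m ⊆ Set.univ.pi fun _ : Fin n =>
        WeakDual.toStrongDual ⁻¹' Metric.closedBall 0 2 := by
      rintro w ⟨-, hw2⟩ i -
      simp only [Set.mem_preimage, mem_closedBall_zero_iff]
      have h1 : ‖g (w i)‖ ≤ ∑ j, ‖g (w j)‖ :=
        Finset.single_le_sum (f := fun j => ‖g (w j)‖) (fun j _ => norm_nonneg _)
          (Finset.mem_univ i)
      have h2 : 1 / ((m : ℝ) + 1) ≤ 1 := by
        rw [div_le_one (by positivity)]; linarith [Nat.cast_nonneg (α := ℝ) m]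
      calc ‖g (w i)‖ ≤ 1 + 1 / (m + 1) := le_trans h1 hw2
        _ ≤ 2 := by linarith
    exact IsCompact.of_isClosed_subset
      (isCompact_univ_pi fun _ => WeakDual.isCompact_closedBall (0 : StrongDual ℝ Z) 2)
      (hS_closed m) hsub
  have hS_nonempty : ∀ m, (S m).Nonempty := by
    intro m
    have hε : (0 : ℝ) < 1 / (m + 1) := by positivity
    obtain ⟨w, hrep, hwlt⟩ := approx_rep hball hz hε
    refine ⟨fun i => StrongDual.toWeakDual (w i), ?_, le_of_lt hwlt⟩
    exact fun k => ((hchar w).1 hrep k)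
  have hS_dir : Directed (· ⊇ ·) S := by
    have hmono : ∀ a b : ℕ, a ≤ b → S b ⊆ S a := by
      intro a c hac w hw
      refine ⟨hw.1, hw.2.trans ?_⟩
      have : 1 / ((c : ℝ) + 1) ≤ 1 / ((a : ℝ) + 1) := by
        apply one_div_le_one_div_of_le (by positivity)
        have := Nat.cast_le (α := ℝ).2 hac
        linarith
      linarith
    intro a c
    exact ⟨max a c, hmono a _ (le_max_left a c), hmono c _ (le_max_right a c)⟩
  obtain ⟨w, hw⟩ := IsCompact.nonempty_iInter_of_directed_nonempty_isCompact_isClosed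
    S hS_dir hS_nonempty hS_compact hS_closed
  simp only [Set.mem_iInter] at hw
  refine ⟨fun i => g (w i), (hchar _).2 (hw 0).1, ?_⟩
  by_contra hcon
  push_neg at hcon
  obtain ⟨m, hm⟩ := exists_nat_one_div_lt (sub_pos.2 hcon)
  have := (hw m).2
  have : (1 : ℝ) / (m + 1) < ∑ i, ‖g (w i)‖ - 1 := by
    simpa using hm
  linarith [(hw m).2]

/-- If the unit ball of a (finite-dimensional) space `X` is the convex hull of finitely
many norm-one points and `Y = Z*` is a dual space, then every `z ∈ X ⊗π Y` of projective
norm one is a finite convex combination of elementary tensors of norm-one vectors, and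
hence attains its projective norm. -/
theorem stmt12 (X Z : Type*) [NormedAddCommGroup X] [NormedSpace ℝ X]
    [FiniteDimensional ℝ X]
    [NormedAddCommGroup Z] [NormedSpace ℝ Z] [CompleteSpace Z]
    (n : ℕ) (x : Fin n → X) (hx : ∀ i, ‖x i‖ = 1)
    (hball : Metric.closedBall (0 : X) 1 = convexHull ℝ (Set.range x))
    (z : X ⊗[ℝ] StrongDual ℝ Z) (hz : projNorm z = 1) :
    ∃ (m : ℕ) (μ : Fin m → ℝ) (u : Fin m → X) (v : Fin m → StrongDual ℝ Z),
      (∀ i, 0 ≤ μ i) ∧ (∑ i, μ i) = 1 ∧ (∀ i, ‖u i‖ = 1) ∧ (∀ i, ‖v i‖ = 1) ∧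
      z = ∑ i, μ i • (u i ⊗ₜ[ℝ] v i) ∧
      projNorm z = ∑ i, μ i * (‖u i‖ * ‖v i‖) := by
  classical
  obtain ⟨w, hrep, hle⟩ := exact_rep hball hz
  have hge : (1 : ℝ) ≤ ∑ i, ‖w i‖ := by
    have := Stmt12Aux.projNorm_le z x w hrep
    rw [hz] at this
    calc (1 : ℝ) ≤ ∑ i, ‖x i‖ * ‖w i‖ := this
      _ = ∑ i, ‖w i‖ := by refine Finset.sum_congr rfl fun i _ => ?_; rw [hx i, one_mul]
  have hsum : ∑ i, ‖w i‖ = 1 := le_antisymm hle hge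
  have hex : ∃ i₀, w i₀ ≠ 0 := by
    by_contra h
    push_neg at h
    simp only [h, norm_zero, Finset.sum_const_zero] at hsum
    norm_num at hsum
  obtain ⟨i₀, hi₀⟩ := hex
  refine ⟨n, fun i => ‖w i‖, x,
    fun i => if h : w i = 0 then ‖w i₀‖⁻¹ • w i₀ else ‖w i‖⁻¹ • w i,
    fun i => norm_nonneg _, hsum, hx, ?_, ?_, ?_⟩
  · intro i
    show ‖if h : w i = 0 then ‖w i₀‖⁻¹ • w i₀ else ‖w i‖⁻¹ • w i‖ = 1
    by_cases h : w i = 0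
    · rw [dif_pos h, norm_smul, norm_inv, norm_norm,
        inv_mul_cancel₀ (norm_ne_zero_iff.2 hi₀)]
    · rw [dif_neg h, norm_smul, norm_inv, norm_norm,
        inv_mul_cancel₀ (norm_ne_zero_iff.2 h)]
  · rw [hrep]
    refine Finset.sum_congr rfl fun i _ => ?_
    show x i ⊗ₜ[ℝ] w i
      = ‖w i‖ • (x i ⊗ₜ[ℝ] if h : w i = 0 then ‖w i₀‖⁻¹ • w i₀ else ‖w i‖⁻¹ • w i)
    by_cases h : w i = 0
    · simp [h]
    · rw [dif_neg h, ← TensorProduct.tmul_smul, smul_inv_smul₀ (norm_ne_zero_iff.2 h)]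
  · rw [hz]
    have : ∀ i : Fin n, ‖w i‖ * (‖x i‖ *
        ‖if h : w i = 0 then ‖w i₀‖⁻¹ • w i₀ else ‖w i‖⁻¹ • w i‖) = ‖w i‖ := by
      intro i
      by_cases h : w i = 0
      · simp [h]
      · rw [dif_neg h, hx i,
          norm_smul, norm_inv, norm_norm, inv_mul_cancel₀ (norm_ne_zero_iff.2 h)]
        ring
    rw [Finset.sum_congr rfl fun i _ => this i, hsum]
end
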